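/- The Dunkl q-Szász-Mirakjan operator applied to e_1(t)=t satisfies D*_{n,q}(e_1; x) = q x for all x ≥ 0. -/
import Mathlib


open Real Filter Topology

noncomputable def theta (k : ℕ) : ℝ := if Even k then 0 else 1

noncomputable def gam (μ q : ℝ) : ℕ → ℝ
  | 0 => 1
  | n + 1 => ((1 - q ^ (2 * μ * theta (n + 1) + (n + 1 : ℝ))) / (1 - q)) * gam μ q n

/-- q-number of a real `a`: `[a]_q = (1-q^a)/(1-q)` (real exponentiation). -/
noncomputable def qnum (q a : ℝ) : ℝ := (1 - q ^ a) / (1 - q)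

/-- q-Dunkl exponential `E_{μ,q}`. -/
noncomputable def Eexp (μ q x : ℝ) : ℝ := ∑' k : ℕ, q ^ (k * (k - 1) / 2) * x ^ k / gam μ q k

/-- nodes of the Dunkl q-Szász-Mirakjan operator. -/
noncomputable def node (μ q : ℝ) (n k : ℕ) : ℝ :=
  (1 - q ^ (2 * μ * theta k + (k : ℝ))) / (q ^ ((k : ℝ) - 2) * (1 - q ^ n))

/-- Dunkl q-Szász-Mirakjan operator `D*_{n,q}`. -/
noncomputable def Dop (μ q : ℝ) (n : ℕ) (f : ℝ → ℝ) (x : ℝ) : ℝ :=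
  (1 / Eexp μ q (qnum q n * x)) *
    ∑' k : ℕ, (qnum q n * x) ^ k / gam μ q k * q ^ (k * (k - 1) / 2) * f (node μ q n k)

lemma theta_nonneg (k : ℕ) : 0 ≤ theta k := by
  unfold theta; split <;> norm_num

lemma nat_tri (m : ℕ) : (m + 1) * m / 2 = m * (m - 1) / 2 + m := by
  have h : (m + 1) * m = m * (m - 1) + 2 * m := by
    cases m with
    | zero => rfl
    | succ k => simp [Nat.succ_sub_one]; ring
  rw [h, Nat.add_mul_div_left _ _ (by norm_num : 0 < 2)]

lemma gam_ge_one {μ q : ℝ} (hq0 : 0 < q) (hq1 : q < 1) (hμ : 0 < μ) :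
    ∀ k, 1 ≤ gam μ q k := by
  intro k
  induction k with
  | zero => simp [gam]
  | succ m ih =>
    have hexp : (1 : ℝ) ≤ 2 * μ * theta (m + 1) + (m + 1 : ℝ) := by
      have h1 : 0 ≤ 2 * μ * theta (m + 1) :=
        mul_nonneg (by positivity) (theta_nonneg _)
      have h2 : (1 : ℝ) ≤ (m + 1 : ℝ) := by
        have := Nat.one_le_iff_ne_zero.mpr (Nat.succ_ne_zero m)
        push_cast; linarith [Nat.cast_nonneg (α := ℝ) m]
      linarith
    have hle : q ^ (2 * μ * theta (m + 1) + (m + 1 : ℝ)) ≤ q := by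
      have := Real.rpow_le_rpow_of_exponent_ge hq0 hq1.le hexp
      simpa using this
    have hfac : (1 : ℝ) ≤ (1 - q ^ (2 * μ * theta (m + 1) + (m + 1 : ℝ))) / (1 - q) := by
      rw [le_div_iff₀ (by linarith)]
      linarith
    calc (1 : ℝ) ≤ 1 * 1 := by norm_num
      _ ≤ ((1 - q ^ (2 * μ * theta (m + 1) + (m + 1 : ℝ))) / (1 - q)) * gam μ q m :=
        mul_le_mul hfac ih (by norm_num) (by linarith)
      _ = gam μ q (m + 1) := rfl

lemma gam_pos {μ q : ℝ} (hq0 : 0 < q) (hq1 : q < 1) (hμ : 0 < μ) (k : ℕ) :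
    0 < gam μ q k := lt_of_lt_of_le one_pos (gam_ge_one hq0 hq1 hμ k)

lemma summable_b {q y : ℝ} (hq0 : 0 < q) (hq1 : q < 1) (hy : 0 ≤ y) :
    Summable (fun k : ℕ => q ^ (k * (k - 1) / 2) * y ^ k) := by
  apply summable_of_ratio_norm_eventually_le (r := 1 / 2) (by norm_num)
  have htend : Tendsto (fun k : ℕ => q ^ k * y) atTop (𝓝 0) := by
    simpa using (tendsto_pow_atTop_nhds_zero_of_lt_one hq0.le hq1).mul_const y
  filter_upwards [htend.eventually_le_const (by norm_num : (0 : ℝ) < 1 / 2)] with k hk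
  have hb : 0 ≤ q ^ (k * (k - 1) / 2) * y ^ k := by positivity
  have step : q ^ ((k + 1) * k / 2) * y ^ (k + 1)
      = (q ^ (k * (k - 1) / 2) * y ^ k) * (q ^ k * y) := by
    rw [nat_tri, pow_add, pow_succ]; ring
  have hsimp : (k + 1) * ((k + 1) - 1) / 2 = (k + 1) * k / 2 := by simp
  rw [Real.norm_eq_abs, Real.norm_eq_abs, abs_of_nonneg hb,
    abs_of_nonneg (by positivity), hsimp, step]
  calc (q ^ (k * (k - 1) / 2) * y ^ k) * (q ^ k * y)
      ≤ (q ^ (k * (k - 1) / 2) * y ^ k) * (1 / 2) := by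
        apply mul_le_mul_of_nonneg_left hk hb
    _ = 1 / 2 * (q ^ (k * (k - 1) / 2) * y ^ k) := by ring

lemma summable_a {μ q y : ℝ} (hq0 : 0 < q) (hq1 : q < 1) (hμ : 0 < μ) (hy : 0 ≤ y) :
    Summable (fun k : ℕ => q ^ (k * (k - 1) / 2) * y ^ k / gam μ q k) := by
  apply Summable.of_nonneg_of_le (fun k => by
      have := gam_pos hq0 hq1 hμ (μ := μ) k; positivity)
    (fun k => ?_) (summable_b hq0 hq1 hy)
  have h1 := gam_ge_one hq0 hq1 hμ (μ := μ) k
  have hb : 0 ≤ q ^ (k * (k - 1) / 2) * y ^ k := by positivity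
  calc q ^ (k * (k - 1) / 2) * y ^ k / gam μ q k
      ≤ q ^ (k * (k - 1) / 2) * y ^ k / 1 := by
        apply div_le_div_of_nonneg_left hb one_pos h1
    _ = q ^ (k * (k - 1) / 2) * y ^ k := by ring

lemma Eexp_pos {μ q y : ℝ} (hq0 : 0 < q) (hq1 : q < 1) (hμ : 0 < μ) (hy : 0 ≤ y) :
    0 < Eexp μ q y := by
  have hs := summable_a (μ := μ) hq0 hq1 hμ hy
  have h0 : (1 : ℝ) ≤ ∑' k : ℕ, q ^ (k * (k - 1) / 2) * y ^ k / gam μ q k := by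
    have := Summable.le_tsum hs 0 (fun i _ => by
      have := gam_pos hq0 hq1 hμ (μ := μ) i; positivity)
    simpa [gam] using this
  unfold Eexp
  linarith

theorem Dop_e1 (q μ : ℝ) (hq0 : 0 < q) (hq1 : q < 1) (hμ : 0 < μ)
    (n : ℕ) (hn : 1 ≤ n) (x : ℝ) (hx : 0 ≤ x) :
    Dop μ q n (fun t => t) x = q * x := by
  have hq' : (0 : ℝ) < 1 - q := by linarith
  have hn' : (0 : ℝ) < (n : ℝ) := by exact_mod_cast hn
  have hqn : (0 : ℝ) < 1 - q ^ (n : ℝ) := by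
    have : q ^ (n : ℝ) < 1 := Real.rpow_lt_one hq0.le hq1 hn'
    linarith
  set y : ℝ := qnum q (n : ℝ) * x with hydef
  have hqnum : qnum q (n : ℝ) = (1 - q ^ (n : ℝ)) / (1 - q) := rfl
  have hy : 0 ≤ y := mul_nonneg (div_nonneg hqn.le hq'.le) hx
  have hE : 0 < Eexp μ q y := Eexp_pos hq0 hq1 hμ hy
  set T : ℕ → ℝ := fun k => y ^ k / gam μ q k * q ^ (k * (k - 1) / 2) * node μ q n k with hT
  have key : ∀ m : ℕ, T (m + 1) = q * x * (q ^ (m * (m - 1) / 2) * y ^ m / gam μ q m) := by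
    intro m
    have hc : 0 < 1 - q ^ (2 * μ * theta (m + 1) + ((m : ℝ) + 1)) := by
      have hexp : (0 : ℝ) < 2 * μ * theta (m + 1) + ((m : ℝ) + 1) := by
        have := mul_nonneg (by positivity : (0:ℝ) ≤ 2 * μ) (theta_nonneg (m + 1))
        have := Nat.cast_nonneg (α := ℝ) m
        linarith
      have := Real.rpow_lt_one hq0.le hq1 hexp
      linarith
    have hgam : gam μ q (m + 1)
        = ((1 - q ^ (2 * μ * theta (m + 1) + ((m : ℝ) + 1))) / (1 - q)) * gam μ q m := rfl
    have hgm : 0 < gam μ q m := gam_pos hq0 hq1 hμ m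
    have hnode : node μ q n (m + 1)
        = (1 - q ^ (2 * μ * theta (m + 1) + ((m : ℝ) + 1))) / ((q ^ m / q) * (1 - q ^ (n : ℝ))) := by
      unfold node
      have h1 : ((m + 1 : ℕ) : ℝ) - 2 = (m : ℝ) - 1 := by push_cast; ring
      have h2 : 2 * μ * theta (m + 1) + ((m + 1 : ℕ) : ℝ) = 2 * μ * theta (m + 1) + ((m : ℝ) + 1) := by
        push_cast; ring
      rw [h1, h2, Real.rpow_sub hq0, Real.rpow_one, Real.rpow_natCast,
        ← Real.rpow_natCast q n]
    have hpow : q ^ ((m + 1) * ((m + 1) - 1) / 2) = q ^ (m * (m - 1) / 2) * q ^ m := by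
      have : (m + 1) * ((m + 1) - 1) / 2 = m * (m - 1) / 2 + m := by
        simpa using nat_tri m
      rw [this, pow_add]
    have hysucc : y ^ (m + 1) = y ^ m * ((1 - q ^ (n : ℝ)) / (1 - q) * x) := by
      rw [pow_succ, hydef, hqnum]
    rw [hT]
    simp only
    rw [hnode, hgam, hpow, hysucc]
    have hqm : (0:ℝ) < q ^ m := by positivity
    set c := 1 - q ^ (2 * μ * theta (m + 1) + ((m : ℝ) + 1)) with hcdef
    set g := gam μ q m with hgdef
    set Y := y ^ m with hYdef
    set P := q ^ (m * (m - 1) / 2) with hPdef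
    set A := 1 - q ^ (n : ℝ) with hAdef
    set Qm := q ^ m with hQmdef
    clear_value c g Y P A Qm
    field_simp
  have hT0 : T 0 = 0 := by
    have : node μ q n 0 = 0 := by
      simp [node, theta]
    simp [hT, this]
  have hshift : ∑' k, T k = ∑' m, T (m + 1) := by
    refine (Function.Injective.tsum_eq Nat.succ_injective ?_).symm
    intro k hk
    cases k with
    | zero => exact absurd hT0 hk
    | succ m => exact ⟨m, rfl⟩
  have hsum : ∑' k, T k = q * x * Eexp μ q y := by
    rw [hshift]
    have : ∀ m : ℕ, T (m + 1) = q * x * (q ^ (m * (m - 1) / 2) * y ^ m / gam μ q m) := key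
    calc ∑' m, T (m + 1)
        = ∑' m : ℕ, q * x * (q ^ (m * (m - 1) / 2) * y ^ m / gam μ q m) := by
          exact tsum_congr key
      _ = q * x * ∑' m : ℕ, q ^ (m * (m - 1) / 2) * y ^ m / gam μ q m := tsum_mul_left
      _ = q * x * Eexp μ q y := rfl
  have hDop : Dop μ q n (fun t => t) x = (1 / Eexp μ q y) * ∑' k, T k := by
    unfold Dop
    rfl
  rw [hDop, hsum]
  field_simp
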